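/- arXiv:2005.09872 — 5 statements merged into one kernel-verified Lean document; each statement's English description precedes it below -/
import Mathlib

section
/- Let A be an n×n real matrix and P a symmetric positive definite matrix with AᵀP + PA ≤ 0 (negative semidefinite). Let b ∈ ℝⁿ and suppose the pair (A, b) is controllable, i.e., the matrix [b, Ab, ..., A^{n−1}b] has rank n. Then the only solution x : ℝ → ℝⁿ of ẋ = Ax satisfying both bᵀP x(t) = 0 and x(t)ᵀ(AᵀP + PA)x(t) = 0 for all t is x ≡ 0. -/
/-!
Write `Q = AᵀP + PA`. Since `Q` is negative semidefinite, `xᵀQx = 0` forces `Qx = 0`, so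
`y = Px` solves the adjoint equation `ẏ = PAx = -AᵀPx = -Aᵀy`. Differentiating `bᵀy ≡ 0`
along this equation gives `(Ab)ᵀy ≡ 0`, and inductively `(Aᵏb)ᵀy ≡ 0` for all `k`. By
controllability `y(t)` is orthogonal to everything, so `Px(t) = 0` and hence `x(t) = 0`.
-/

open Matrix

variable {ι κ : Type*} [Fintype ι]

namespace Matrix

theorem IsSymm.transpose_mul_add_mul {R : Type*} [CommSemiring R] (A : Matrix ι ι R)
    {P : Matrix ι ι R} (hP : P.IsSymm) : (Aᵀ * P + P * A).IsSymm := by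
  rw [IsSymm, transpose_add, transpose_mul, transpose_mul, transpose_transpose, hP.eq, add_comm]

theorem mulVec_eq_zero_of_dotProduct_mulVec_self_eq_zero {M : Matrix ι ι ℝ} (hM : M.IsSymm)
    (hnonpos : ∀ v, v ⬝ᵥ M *ᵥ v ≤ 0) {v : ι → ℝ} (hv : v ⬝ᵥ M *ᵥ v = 0) : M *ᵥ v = 0 := by
  have hneg : (-M).PosSemidef :=
    .of_dotProduct_mulVec_nonneg (isHermitian_iff_isSymm.mpr hM.neg) fun w => by
      simpa [neg_mulVec] using hnonpos w
  simpa [neg_mulVec, hv] using (hneg.dotProduct_mulVec_zero_iff v).mp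

theorem eq_zero_of_span_eq_top_of_forall_dotProduct_eq_zero {R : Type*} [CommSemiring R]
    {v : κ → ι → R} (hv : Submodule.span R (Set.range v) = ⊤) {w : ι → R}
    (h : ∀ k, v k ⬝ᵥ w = 0) : w = 0 := by
  have hflip : (dotProductBilin R R).flip w = 0 := LinearMap.ext_on_range hv h
  exact dotProduct_eq_zero w fun u => by
    rw [dotProduct_comm]
    exact LinearMap.congr_fun hflip u

end Matrix

section Derivatives

variable {𝕜 : Type*} [NontriviallyNormedField 𝕜] {x : 𝕜 → ι → 𝕜} {x' : ι → 𝕜} {t : 𝕜}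

theorem HasDerivAt.matrix_mulVec [Fintype κ] (M : Matrix κ ι 𝕜) (hx : HasDerivAt x x' t) :
    HasDerivAt (fun s => M *ᵥ x s) (M *ᵥ x') t :=
  (⟨M.mulVecLin, continuous_const.matrix_mulVec continuous_id⟩ : (ι → 𝕜) →L[𝕜] κ → 𝕜)
    |>.hasFDerivAt.comp_hasDerivAt t hx

theorem HasDerivAt.const_dotProduct (c : ι → 𝕜) (hx : HasDerivAt x x' t) :
    HasDerivAt (fun s => c ⬝ᵥ x s) (c ⬝ᵥ x') t :=
  (⟨dotProductBilin 𝕜 𝕜 c, continuous_const.dotProduct continuous_id⟩ : (ι → 𝕜) →L[𝕜] 𝕜)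
    |>.hasFDerivAt.comp_hasDerivAt t hx

theorem pow_mulVec_dotProduct_eq_zero_of_hasDerivAt_neg_transpose [DecidableEq ι] {A : Matrix ι ι 𝕜}
    {y : 𝕜 → ι → 𝕜} (hy : ∀ t, HasDerivAt y (-(Aᵀ *ᵥ y t)) t) {b : ι → 𝕜}
    (horth : ∀ t, b ⬝ᵥ y t = 0) (k : ℕ) (t : 𝕜) : (A ^ k *ᵥ b) ⬝ᵥ y t = 0 := by
  induction k generalizing t with
  | zero => simpa using horth t
  | succ k ih =>
    have hderiv := (hy t).const_dotProduct (A ^ k *ᵥ b)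
    rw [show (fun s => (A ^ k *ᵥ b) ⬝ᵥ y s) = fun _ => 0 from funext ih] at hderiv
    have hzero := hderiv.unique (hasDerivAt_const t 0)
    rwa [dotProduct_neg, neg_eq_zero, dotProduct_mulVec, vecMul_transpose, mulVec_mulVec,
      ← pow_succ'] at hzero

end Derivatives

theorem stmt8_general (n : ℕ) (A P : Matrix (Fin n) (Fin n) ℝ)
    (hPpos : P.PosDef)
    (hdiss : ∀ φ : Fin n → ℝ, φ ⬝ᵥ ((Aᵀ * P + P * A) *ᵥ φ) ≤ 0)
    (b : Fin n → ℝ)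
    (hctrb : Submodule.span ℝ (Set.range fun k : Fin n => (A ^ (k : ℕ)) *ᵥ b) = ⊤)
    (x : ℝ → Fin n → ℝ)
    (hx : ∀ t : ℝ, HasDerivAt x (A *ᵥ x t) t)
    (horth : ∀ t : ℝ, b ⬝ᵥ (P *ᵥ x t) = 0)
    (hcons : ∀ t : ℝ, x t ⬝ᵥ ((Aᵀ * P + P * A) *ᵥ x t) = 0) :
    ∀ t : ℝ, x t = 0 := by
  have hPsymm : P.IsSymm := isHermitian_iff_isSymm.mp hPpos.isHermitian
  have hker (t : ℝ) : (Aᵀ * P + P * A) *ᵥ x t = 0 :=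
    mulVec_eq_zero_of_dotProduct_mulVec_self_eq_zero (hPsymm.transpose_mul_add_mul A) hdiss
      (hcons t)
  have hadjoint (t : ℝ) : HasDerivAt (fun s => P *ᵥ x s) (-(Aᵀ *ᵥ (P *ᵥ x t))) t := by
    convert (hx t).matrix_mulVec P using 1
    rw [mulVec_mulVec, mulVec_mulVec, eq_comm, eq_neg_iff_add_eq_zero, add_comm,
      ← add_mulVec, hker t]
  intro t
  have hPx : P *ᵥ x t = 0 :=
    eq_zero_of_span_eq_top_of_forall_dotProduct_eq_zero hctrb fun k =>
      pow_mulVec_dotProduct_eq_zero_of_hasDerivAt_neg_transpose hadjoint horth k t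
  classical
  exact mulVec_injective_of_isUnit hPpos.isUnit (hPx.trans (mulVec_zero P).symm)

/-- Jurdjevic–Quinn condition for `ẋ = Ax` with metric `P`: if `AᵀP + PA ≤ 0`
and `(A, b)` is controllable, then the only solution of `ẋ = Ax` along which
both `bᵀPx ≡ 0` and `xᵀ(AᵀP + PA)x ≡ 0` is the zero solution. -/
theorem stmt8 (n : ℕ) (A P : Matrix (Fin n) (Fin n) ℝ)
    (hPsymm : P.IsSymm) (hPpos : P.PosDef)
    (hdiss : ∀ φ : Fin n → ℝ, φ ⬝ᵥ ((Aᵀ * P + P * A) *ᵥ φ) ≤ 0)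
    (b : Fin n → ℝ)
    (hctrb : Submodule.span ℝ (Set.range fun k : Fin n => (A ^ (k : ℕ)) *ᵥ b) = ⊤)
    (x : ℝ → Fin n → ℝ)
    (hx : ∀ t : ℝ, HasDerivAt x (A *ᵥ x t) t)
    (horth : ∀ t : ℝ, b ⬝ᵥ (P *ᵥ x t) = 0)
    (hcons : ∀ t : ℝ, x t ⬝ᵥ ((Aᵀ * P + P * A) *ᵥ x t) = 0) :
    ∀ t : ℝ, x t = 0 :=
  stmt8_general n A P hPpos hdiss b hctrb x hx horth hcons
end

section
/- Let f(x, u) = Ax + b(x)u with A ∈ ℝ^{n×n} and b : ℝⁿ → ℝⁿ of class C¹. Let P be a symmetric positive definite matrix. Then the system is weakly contractive with respect to the constant metric P for all u ∈ ℝ (i.e., for every fixed u, Dₓf(x,u)ᵀP + P·Dₓf(x,u) ≤ 0 for all x) if and only if AᵀP + PA ≤ 0 and Db(x)ᵀP + P·Db(x) = 0 for all x. -/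
/-!
The Jacobian of `f(·, u)` is `A + u • Db(x)`, and the symmetrized quadratic form
`φ ↦ (Jφ)ᵀPφ + φᵀP(Jφ)` is linear in `J`. So for fixed `x` and `φ` the contraction
condition reads `c + u * d ≤ 0` for all `u ∈ ℝ`, which holds iff `c ≤ 0` and `d = 0`.
-/

open Matrix

theorem forall_add_mul_nonpos_iff {𝕜 : Type*} [Field 𝕜] [LinearOrder 𝕜] [IsStrictOrderedRing 𝕜]
    (c d : 𝕜) : (∀ u : 𝕜, c + u * d ≤ 0) ↔ c ≤ 0 ∧ d = 0 := by
  refine ⟨fun h => ⟨by simpa using h 0, ?_⟩, fun ⟨hc, hd⟩ u => by simpa [hd] using hc⟩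
  by_contra hd
  -- `u = (1 - c) / d` makes `c + u * d = 1`.
  have := h ((1 - c) / d)
  rw [div_mul_cancel₀ _ hd] at this
  linarith

theorem fderiv_mulVec_add_smul_apply {m : Type*} [Fintype m]
    (A : Matrix m m ℝ) (u : ℝ) {b : (m → ℝ) → m → ℝ} {x : m → ℝ}
    (hb : DifferentiableAt ℝ b x) (φ : m → ℝ) :
    fderiv ℝ (fun y => A *ᵥ y + u • b y) x φ = A *ᵥ φ + u • fderiv ℝ b x φ := by
  have hf : HasFDerivAt (fun y => A *ᵥ y + u • b y)
      (A.mulVecLin.toContinuousLinearMap + u • fderiv ℝ b x) x :=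
    A.mulVecLin.toContinuousLinearMap.hasFDerivAt.add (hb.hasFDerivAt.const_smul u)
  rw [hf.fderiv]
  rfl

section SymmetrizedForm

variable {m R : Type*} [Fintype m] [CommRing R]

/-- The quadratic form `φ ↦ φᵀ(JᵀP + PJ)φ` along a direction `v = Jφ`. -/
def symmetrizedForm (P : Matrix m m R) (v φ : m → R) : R :=
  v ⬝ᵥ (P *ᵥ φ) + φ ⬝ᵥ (P *ᵥ v)

theorem symmetrizedForm_add_smul (P : Matrix m m R) (v w φ : m → R) (u : R) :
    symmetrizedForm P (v + u • w) φ = symmetrizedForm P v φ + u * symmetrizedForm P w φ := by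
  simp only [symmetrizedForm, mulVec_add, mulVec_smul, add_dotProduct, smul_dotProduct,
    dotProduct_add, dotProduct_smul, smul_eq_mul]
  ring

end SymmetrizedForm

theorem stmt10_general (n : ℕ) (A P : Matrix (Fin n) (Fin n) ℝ)
    (b : (Fin n → ℝ) → Fin n → ℝ) (hb : ContDiff ℝ 1 b) :
    (∀ (u : ℝ) (x φ : Fin n → ℝ),
        (fderiv ℝ (fun y => A *ᵥ y + u • b y) x φ) ⬝ᵥ (P *ᵥ φ)
          + φ ⬝ᵥ (P *ᵥ (fderiv ℝ (fun y => A *ᵥ y + u • b y) x φ)) ≤ 0)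
    ↔
    ((∀ φ : Fin n → ℝ, (A *ᵥ φ) ⬝ᵥ (P *ᵥ φ) + φ ⬝ᵥ (P *ᵥ (A *ᵥ φ)) ≤ 0) ∧
     (∀ x φ : Fin n → ℝ,
        (fderiv ℝ b x φ) ⬝ᵥ (P *ᵥ φ) + φ ⬝ᵥ (P *ᵥ (fderiv ℝ b x φ)) = 0)) := by
  have hform (u : ℝ) (x φ : Fin n → ℝ) :
      symmetrizedForm P (fderiv ℝ (fun y => A *ᵥ y + u • b y) x φ) φ
        = symmetrizedForm P (A *ᵥ φ) φ + u * symmetrizedForm P (fderiv ℝ b x φ) φ := by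
    rw [fderiv_mulVec_add_smul_apply A u (hb.differentiable one_ne_zero x),
      symmetrizedForm_add_smul]
  change (∀ u x φ, symmetrizedForm P _ φ ≤ 0) ↔
    (∀ φ, symmetrizedForm P (A *ᵥ φ) φ ≤ 0) ∧ ∀ x φ, symmetrizedForm P (fderiv ℝ b x φ) φ = 0
  simp only [hform]
  constructor
  · intro h
    exact ⟨fun φ => ((forall_add_mul_nonpos_iff _ _).1 (h · 0 φ)).1,
      fun x φ => ((forall_add_mul_nonpos_iff _ _).1 (h · x φ)).2⟩
  · rintro ⟨hA, hLie⟩ u x φ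
    exact (forall_add_mul_nonpos_iff _ _).2 ⟨hA φ, hLie x φ⟩ u

/-- The system `f(x,u) = Ax + u·b(x)` is weakly contractive w.r.t. the constant
metric `P` for every `u ∈ ℝ` iff `AᵀP + PA ≤ 0` and the Lie derivative of the
metric along `b` vanishes. -/
theorem stmt10 (n : ℕ) (A P : Matrix (Fin n) (Fin n) ℝ)
    (hPsymm : P.IsSymm) (hPpos : P.PosDef)
    (b : (Fin n → ℝ) → Fin n → ℝ) (hb : ContDiff ℝ 1 b) :
    (∀ (u : ℝ) (x φ : Fin n → ℝ),
        (fderiv ℝ (fun y => A *ᵥ y + u • b y) x φ) ⬝ᵥ (P *ᵥ φ)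
          + φ ⬝ᵥ (P *ᵥ (fderiv ℝ (fun y => A *ᵥ y + u • b y) x φ)) ≤ 0)
    ↔
    ((∀ φ : Fin n → ℝ, (A *ᵥ φ) ⬝ᵥ (P *ᵥ φ) + φ ⬝ᵥ (P *ᵥ (A *ᵥ φ)) ≤ 0) ∧
     (∀ x φ : Fin n → ℝ,
        (fderiv ℝ b x φ) ⬝ᵥ (P *ᵥ φ) + φ ⬝ᵥ (P *ᵥ (fderiv ℝ b x φ)) = 0)) :=
  stmt10_general n A P b hb
end

section
/- Let Γ : [s₁,s₂] × ℝ≥0 → ℝⁿ be defined by Γ(s,t) = X(γ(s), t), where X is the C² flow of a time-dependent C¹ vector field F_t on ℝⁿ and γ is a C² path. Let g be a C¹ Riemannian metric on ℝⁿ with (L_{F_t} g) ≤ 0 for all t. Then ∂/∂t [ g(Γ(s,t))(∂Γ/∂s(s,t), ∂Γ/∂s(s,t)) ] = (L_{F_t} g)(Γ(s,t))(∂Γ/∂s(s,t), ∂Γ/∂s(s,t)) ≤ 0. -/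
open Matrix

/-- Lie derivative of a metric `G` (given as a field of bilinear forms) along a
vector field `F`:
`L_F G(x)(φ,ψ) = DG(x)(F(x))(φ,ψ) + G(x)(DF(x)φ, ψ) + G(x)(φ, DF(x)ψ)`. -/
noncomputable def lieDerivG (n : ℕ)
    (G : (Fin n → ℝ) → (Fin n → ℝ) → (Fin n → ℝ) → ℝ)
    (F : (Fin n → ℝ) → Fin n → ℝ) (x φ ψ : Fin n → ℝ) : ℝ :=
  fderiv ℝ (fun y => G y φ ψ) x (F x)
    + G x (fderiv ℝ F x φ) ψ + G x φ (fderiv ℝ F x ψ)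

/-! Viewing the metric as a `C¹` map into continuous bilinear forms, the product rule gives
`∂ₜ[G(Γ)(∂ₛΓ, ∂ₛΓ)] = DG(Γ)(∂ₜΓ)(∂ₛΓ, ∂ₛΓ) + G(Γ)(∂ₜ∂ₛΓ, ∂ₛΓ) + G(Γ)(∂ₛΓ, ∂ₜ∂ₛΓ)`.
Since `Γ` is `C²`, the mixed partials commute, so
`∂ₜ∂ₛΓ = ∂ₛ(F_t ∘ Γ) = DF_t(Γ) ∂ₛΓ`, and the sum is exactly `(L_{F_t} G)(Γ)(∂ₛΓ, ∂ₛΓ)`. -/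

theorem IsBilinearMap.of_symm {R M N : Type*} [CommSemiring R] [AddCommMonoid M] [Module R M]
    [AddCommMonoid N] [Module R N] {B : M → M → N} (hsymm : ∀ φ ψ, B φ ψ = B ψ φ)
    (hlin : ∀ ψ, IsLinearMap R (B · ψ)) : IsBilinearMap R B where
  add_left φ₁ φ₂ ψ := (hlin ψ).map_add φ₁ φ₂
  smul_left c φ ψ := (hlin ψ).map_smul c φ
  add_right φ ψ₁ ψ₂ := by simp only [hsymm φ]; exact (hlin φ).map_add ψ₁ ψ₂
  smul_right c φ ψ := by simp only [hsymm φ]; exact (hlin φ).map_smul c ψ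

section

variable {E : Type*} [NormedAddCommGroup E] [NormedSpace ℝ E]

theorem DifferentiableAt.hasDerivAt_comp_prodMk_left {g : ℝ × ℝ → E} {σ τ : ℝ}
    (hg : DifferentiableAt ℝ g (σ, τ)) :
    HasDerivAt (fun σ => g (σ, τ)) (fderiv ℝ g (σ, τ) (1, 0)) σ :=
  hg.hasFDerivAt.comp_hasDerivAt (l := g) σ ((hasDerivAt_id σ).prodMk (hasDerivAt_const σ τ))

theorem DifferentiableAt.hasDerivAt_comp_prodMk_right {g : ℝ × ℝ → E} {σ τ : ℝ}
    (hg : DifferentiableAt ℝ g (σ, τ)) :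
    HasDerivAt (fun τ => g (σ, τ)) (fderiv ℝ g (σ, τ) (0, 1)) τ :=
  hg.hasFDerivAt.comp_hasDerivAt (l := g) τ ((hasDerivAt_const τ σ).prodMk (hasDerivAt_id τ))

theorem hasDerivAt_deriv_comm {f : ℝ → ℝ → E} (hf : ContDiff ℝ 2 (Function.uncurry f))
    (s t : ℝ) :
    HasDerivAt (fun τ => deriv (fun σ => f σ τ) s) (deriv (fun σ => deriv (f σ) t) s) t := by
  set g := Function.uncurry f
  have hg : Differentiable ℝ g := hf.differentiable two_ne_zero
  have hg' : Differentiable ℝ (fderiv ℝ g) :=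
    (hf.fderiv_right (by norm_num)).differentiable one_ne_zero
  have deriv_fst : ∀ τ, deriv (fun σ => f σ τ) s = fderiv ℝ g (s, τ) (1, 0) := fun τ =>
    (hg (s, τ)).hasDerivAt_comp_prodMk_left.deriv
  have deriv_snd : ∀ σ, deriv (f σ) t = fderiv ℝ g (σ, t) (0, 1) := fun σ =>
    (hg (σ, t)).hasDerivAt_comp_prodMk_right.deriv
  have hsymm : fderiv ℝ (fderiv ℝ g) (s, t) (0, 1) (1, 0)
      = fderiv ℝ (fderiv ℝ g) (s, t) (1, 0) (0, 1) :=
    hf.contDiffAt.isSymmSndFDerivAt (by simp [minSmoothness_of_isRCLikeNormedField]) _ _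
  have hσ : deriv (fun σ => fderiv ℝ g (σ, t) (0, 1)) s
      = fderiv ℝ (fderiv ℝ g) (s, t) (1, 0) (0, 1) := by
    simpa using ((hg' (s, t)).hasDerivAt_comp_prodMk_left.clm_apply
      (hasDerivAt_const s ((0 : ℝ), (1 : ℝ)))).deriv
  simp only [deriv_fst, deriv_snd, hσ, ← hsymm]
  simpa using (hg' (s, t)).hasDerivAt_comp_prodMk_right.clm_apply
    (hasDerivAt_const t ((1 : ℝ), (0 : ℝ)))

theorem hasDerivAt_variation_field {Γ : ℝ → ℝ → E} (hΓ : ContDiff ℝ 2 (Function.uncurry Γ))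
    {V : E → E} {s t : ℝ} (hflow : ∀ σ, HasDerivAt (Γ σ) (V (Γ σ t)) t)
    (hV : DifferentiableAt ℝ V (Γ s t)) :
    HasDerivAt (fun τ => deriv (fun σ => Γ σ τ) s)
      (fderiv ℝ V (Γ s t) (deriv (fun σ => Γ σ t) s)) t := by
  have hΓt : DifferentiableAt ℝ (fun σ => Γ σ t) s :=
    ((hΓ.comp (contDiff_id.prodMk contDiff_const)).differentiable two_ne_zero) s
  have h := hasDerivAt_deriv_comm hΓ s t
  simp only [fun σ => (hflow σ).deriv] at h
  rwa [← fderiv_comp_deriv (l := V) s hV hΓt]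

variable [FiniteDimensional ℝ E]

theorem contDiff_toContinuousBilinearMap {k : WithTop ℕ∞} {G : E → E → E → ℝ}
    (hbil : ∀ x, IsBilinearMap ℝ (G x)) (hG : ∀ φ ψ, ContDiff ℝ k (fun x => G x φ ψ)) :
    ContDiff ℝ k (fun x => (hbil x).toContinuousBilinearMap) :=
  contDiff_clm_apply_iff.2 fun φ => contDiff_clm_apply_iff.2 fun ψ => hG φ ψ

theorem HasDerivAt.bilinear_field_apply {G : E → E → E → ℝ}
    (hbil : ∀ x, IsBilinearMap ℝ (G x)) (hG : ∀ φ ψ, ContDiff ℝ 1 (fun x => G x φ ψ))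
    {c u v : ℝ → E} {c' u' v' : E} {t : ℝ}
    (hc : HasDerivAt c c' t) (hu : HasDerivAt u u' t) (hv : HasDerivAt v v' t) :
    HasDerivAt (fun τ => G (c τ) (u τ) (v τ))
      (fderiv ℝ (fun y => G y (u t) (v t)) (c t) c' + G (c t) u' (v t) + G (c t) (u t) v') t := by
  let B : E → E →L[ℝ] E →L[ℝ] ℝ := fun x => (hbil x).toContinuousBilinearMap
  have hB : Differentiable ℝ B :=
    (contDiff_toContinuousBilinearMap hbil hG).differentiable one_ne_zero
  have hBc : HasDerivAt (fun τ => B (c τ)) (fderiv ℝ B (c t) c') t :=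
    (hB (c t)).hasFDerivAt.comp_hasDerivAt (l := B) t hc
  have hDG : HasFDerivAt (fun y => G y (u t) (v t))
      ((fderiv ℝ B (c t)).flip (u t) |>.flip (v t)) (c t) :=
    (((hB (c t)).hasFDerivAt.clm_apply (hasFDerivAt_const (u t) (c t))).clm_apply
      (hasFDerivAt_const (v t) (c t))).congr_fderiv (by simp)
  rw [hDG.fderiv]
  exact ((hBc.clm_apply hu).clm_apply hv).congr_deriv (by simp [B, add_assoc])

end

theorem stmt13_general (n : ℕ)
    (G : (Fin n → ℝ) → (Fin n → ℝ) → (Fin n → ℝ) → ℝ)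
    (hGsymm : ∀ x φ ψ, G x φ ψ = G x ψ φ)
    (hGlin : ∀ x ψ, IsLinearMap ℝ (fun φ => G x φ ψ))
    (hGsmooth : ∀ φ ψ, ContDiff ℝ 1 (fun x => G x φ ψ))
    (F : ℝ → (Fin n → ℝ) → Fin n → ℝ) (hF : ContDiff ℝ 1 (Function.uncurry F))
    (X : (Fin n → ℝ) → ℝ → Fin n → ℝ) (hX : ContDiff ℝ 2 (Function.uncurry X))
    (hXflow : ∀ x t, HasDerivAt (X x) (F t (X x t)) t)
    (γ : ℝ → Fin n → ℝ) (hγ : ContDiff ℝ 2 γ)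
    (hLie : ∀ (t : ℝ) (x φ : Fin n → ℝ), lieDerivG n G (F t) x φ φ ≤ 0)
    (s t : ℝ) :
    HasDerivAt
      (fun τ => G (X (γ s) τ) (deriv (fun σ => X (γ σ) τ) s) (deriv (fun σ => X (γ σ) τ) s))
      (lieDerivG n G (F t) (X (γ s) t)
        (deriv (fun σ => X (γ σ) t) s) (deriv (fun σ => X (γ σ) t) s)) t ∧
    lieDerivG n G (F t) (X (γ s) t)
      (deriv (fun σ => X (γ σ) t) s) (deriv (fun σ => X (γ σ) t) s) ≤ 0 := by
  have hbil : ∀ x, IsBilinearMap ℝ (G x) := fun x => .of_symm (hGsymm x) (hGlin x)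
  have hΓ : ContDiff ℝ 2 (Function.uncurry fun σ τ => X (γ σ) τ) :=
    hX.comp ((hγ.comp contDiff_fst).prodMk contDiff_snd)
  have hFt : DifferentiableAt ℝ (F t) (X (γ s) t) :=
    (hF.comp (contDiff_const.prodMk contDiff_id)).differentiable one_ne_zero _
  have hvar := hasDerivAt_variation_field hΓ (fun σ => hXflow (γ σ) t) hFt
  exact ⟨(hXflow (γ s) t).bilinear_field_apply hbil hGsmooth hvar hvar, hLie t _ _⟩

/-- Differentiation step of the appendix: for `Γ(s,t) = X(γ(s), t)` with `X`
the C² flow of the time-dependent C¹ vector field `F_t`, the squared speed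
`ρ(s,t) = G(Γ(s,t))(∂Γ/∂s, ∂Γ/∂s)` satisfies
`∂ρ/∂t = (L_{F_t} G)(Γ)(∂Γ/∂s, ∂Γ/∂s) ≤ 0` when `L_{F_t} G ≤ 0`. -/
theorem stmt13 (n : ℕ)
    (G : (Fin n → ℝ) → (Fin n → ℝ) → (Fin n → ℝ) → ℝ)
    (hGsymm : ∀ x φ ψ, G x φ ψ = G x ψ φ)
    (hGlin : ∀ x ψ, IsLinearMap ℝ (fun φ => G x φ ψ))
    (hGpos : ∀ x φ, φ ≠ 0 → 0 < G x φ φ)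
    (hGsmooth : ∀ φ ψ, ContDiff ℝ 1 (fun x => G x φ ψ))
    (F : ℝ → (Fin n → ℝ) → Fin n → ℝ) (hF : ContDiff ℝ 1 (Function.uncurry F))
    (X : (Fin n → ℝ) → ℝ → Fin n → ℝ) (hX : ContDiff ℝ 2 (Function.uncurry X))
    (hX0 : ∀ x, X x 0 = x)
    (hXflow : ∀ x t, HasDerivAt (X x) (F t (X x t)) t)
    (γ : ℝ → Fin n → ℝ) (hγ : ContDiff ℝ 2 γ)
    (hLie : ∀ (t : ℝ) (x φ : Fin n → ℝ), lieDerivG n G (F t) x φ φ ≤ 0)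
    (s t : ℝ) :
    HasDerivAt
      (fun τ => G (X (γ s) τ) (deriv (fun σ => X (γ σ) τ) s) (deriv (fun σ => X (γ σ) τ) s))
      (lieDerivG n G (F t) (X (γ s) t)
        (deriv (fun σ => X (γ σ) t) s) (deriv (fun σ => X (γ σ) t) s)) t ∧
    lieDerivG n G (F t) (X (γ s) t)
      (deriv (fun σ => X (γ σ) t) s) (deriv (fun σ => X (γ σ) t) s) ≤ 0 :=
  stmt13_general n G hGsymm hGlin hGsmooth F hF X hX hXflow γ hγ hLie s t
end

section
/- Let V : D → ℝ≥0 be C¹ and proper on an open set D ⊆ ℝⁿ containing 0, with V(0) = 0 and ∇V(x)·f(x) ≤ −V(x) on D, and suppose V is positive definite. Let (x(t), x̂(t)) be a solution pair such that V(x̂(t)) ≤ max{V(x̂(0)),1} for all t, d(x(t), x̂(t)) is non-increasing and tends to 0, and (d/dt)V(x̂(t)) ≤ −V(x̂(t)) + μ(d(x(t), x̂(t))) with μ continuous non-decreasing, μ(0)=0. Then x̂(t) → 0 and x(t) → 0 as t → ∞. -/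
/-!
Once `μ(d(x, x̂)) ≤ ε/2`, the inequality `(V ∘ x̂)' ≤ -V ∘ x̂ + ε/2` makes `eᵗ (V(x̂(t)) - ε/2)`
non-increasing, so `V(x̂(t))` is eventually below every `ε > 0`. The sublevel sets of the proper
function `V` are compact, hence closed, so every cluster point `y` of `x̂` has `V y ≤ 0`, and
positive definiteness gives `y = 0`. Finally `d(x(t), 0) ≤ d(x(t), x̂(t)) + d(x̂(t), 0) → 0`.
-/

open Set Filter Topology Real

theorem antitoneOn_exp_mul_sub_of_hasDerivAt_le {v v' : ℝ → ℝ} {T c : ℝ}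
    (hv : ∀ t ≥ T, HasDerivAt v (v' t) t) (hle : ∀ t ≥ T, v' t ≤ -v t + c) :
    AntitoneOn (fun t => exp t * (v t - c)) (Ici T) := by
  have hderiv : ∀ t ≥ T, HasDerivAt (fun t => exp t * (v t - c))
      (exp t * (v t - c) + exp t * v' t) t := fun t ht =>
    (hasDerivAt_exp t).mul ((hv t ht).sub_const c)
  refine antitoneOn_of_hasDerivWithinAt_nonpos (convex_Ici T)
    (fun t ht => (hderiv t ht).continuousAt.continuousWithinAt)
    (fun t ht => (hderiv t (interior_subset ht)).hasDerivWithinAt) fun t ht => ?_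
  have hv't := hle t (interior_subset ht)
  have : exp t * (v t - c + v' t) ≤ 0 :=
    mul_nonpos_of_nonneg_of_nonpos (exp_pos t).le (by linarith)
  linarith

theorem eventually_le_of_hasDerivAt_le_neg_add {v w : ℝ → ℝ}
    (hv : ∀ᶠ t in atTop, ∃ dv, HasDerivAt v dv t ∧ dv ≤ -v t + w t)
    (hw : Tendsto w atTop (𝓝 0)) {ε : ℝ} (hε : 0 < ε) :
    ∀ᶠ t in atTop, v t ≤ ε := by
  obtain ⟨T, hT⟩ := eventually_atTop.1
    (hv.and (hw.eventually (eventually_le_nhds (half_pos hε))))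
  choose! v' hv' hv'le using fun t (ht : t ≥ T) => (hT t ht).1
  have hanti := antitoneOn_exp_mul_sub_of_hasDerivAt_le (c := ε / 2) hv'
    fun t ht => (hv'le t ht).trans (by linarith [(hT t ht).2])
  set K := exp T * (v T - ε / 2)
  have hdecay : Tendsto (fun t => K * exp (-t)) atTop (𝓝 0) := by
    simpa using tendsto_exp_neg_atTop_nhds_zero.const_mul K
  filter_upwards [eventually_ge_atTop T, hdecay.eventually (eventually_le_nhds (half_pos hε))]
    with t ht hKt
  have hexp : exp t * (v t - ε / 2) ≤ K := hanti self_mem_Ici ht ht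
  have : v t - ε / 2 ≤ K * exp (-t) := by
    rw [exp_neg, ← div_eq_mul_inv, le_div_iff₀ (exp_pos t)]
    linarith
  linarith

theorem tendsto_of_forall_eventually_le_of_isCompact_sublevel {X α : Type*} [TopologicalSpace X]
    [T2Space X] {D : Set X} {V : X → ℝ} {x₀ : X}
    (hproper : ∀ r : ℝ, IsCompact {y | y ∈ D ∧ V y ≤ r})
    (hpos : ∀ y ∈ D, y ≠ x₀ → 0 < V y) {l : Filter α} {u : α → X}
    (huD : ∀ᶠ t in l, u t ∈ D) (hVu : ∀ ε > 0, ∀ᶠ t in l, V (u t) ≤ ε) :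
    Tendsto u l (𝓝 x₀) := by
  have hmem : ∀ ε > 0, ∀ᶠ t in l, u t ∈ {y | y ∈ D ∧ V y ≤ ε} := fun ε hε =>
    huD.and (hVu ε hε)
  refine (hproper 1).tendsto_nhds_of_unique_mapClusterPt (hmem 1 one_pos) fun y hyD hy => ?_
  have hyε : ∀ ε > 0, V y ≤ ε := fun ε hε =>
    ((hproper ε).isClosed.mem_of_mapClusterPt hy (hmem ε hε)).2
  by_contra hne
  have hVy := hpos y hyD.1 hne
  linarith [hyε (V y / 2) (half_pos hVy)]

theorem tendsto_dist_zero_of_tendsto_of_tendsto_dist_zero {X α : Type*} [TopologicalSpace X]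
    {d : X → X → ℝ} (hdcont : Continuous (Function.uncurry d)) (hdnn : ∀ a b, 0 ≤ d a b)
    (hdtri : ∀ a b c, d a c ≤ d a b + d b c) {y : X} (hdy : d y y = 0) {l : Filter α}
    {u v : α → X} (hv : Tendsto v l (𝓝 y)) (huv : Tendsto (fun t => d (u t) (v t)) l (𝓝 0)) :
    Tendsto (fun t => d (u t) y) l (𝓝 0) := by
  have hvy : Tendsto (fun t => d (v t) y) l (𝓝 0) := by
    simpa [hdy, Function.comp_def] using (hdcont.tendsto (y, y)).comp (hv.prodMk_nhds tendsto_const_nhds)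
  exact tendsto_of_tendsto_of_tendsto_of_le_of_le tendsto_const_nhds
    (by simpa using huv.add hvy) (fun t => hdnn _ _) (fun t => hdtri _ _ _)

theorem stmt17_general (n : ℕ) (D : Set (Fin n → ℝ))
    (V : (Fin n → ℝ) → ℝ)
    (hVpos : ∀ y ∈ D, y ≠ 0 → 0 < V y)
    (hproper : ∀ r : ℝ, IsCompact {y | y ∈ D ∧ V y ≤ r})
    (d : (Fin n → ℝ) → (Fin n → ℝ) → ℝ)
    (hd0 : ∀ a b : Fin n → ℝ, d a b = 0 ↔ a = b)
    (hdtri : ∀ a b c : Fin n → ℝ, d a c ≤ d a b + d b c)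
    (hdnn : ∀ a b : Fin n → ℝ, 0 ≤ d a b)
    (hdcont : Continuous (Function.uncurry d))
    (hdcompat : ∀ (u : ℝ → Fin n → ℝ) (y : Fin n → ℝ),
      Tendsto (fun t => d (u t) y) atTop (nhds 0) → Tendsto u atTop (nhds y))
    (μ : ℝ → ℝ) (hμc : ContinuousOn μ (Ici 0))
    (hμ0 : μ 0 = 0)
    (x xh : ℝ → Fin n → ℝ)
    (hxhD : ∀ t ≥ (0:ℝ), xh t ∈ D)
    (hdto0 : Tendsto (fun t => d (x t) (xh t)) atTop (nhds 0))
    (hVder : ∀ t ≥ (0:ℝ), ∃ dv : ℝ, HasDerivAt (fun τ => V (xh τ)) dv t ∧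
      dv ≤ -V (xh t) + μ (d (x t) (xh t))) :
    Tendsto xh atTop (nhds 0) ∧ Tendsto x atTop (nhds 0) := by
  have hμd : Tendsto (fun t => μ (d (x t) (xh t))) atTop (𝓝 0) := by
    simpa [hμ0, Function.comp_def] using (hμc 0 self_mem_Ici).tendsto.comp
      (tendsto_nhdsWithin_iff.2 ⟨hdto0, .of_forall fun t => hdnn _ _⟩)
  have hVxh : ∀ ε > 0, ∀ᶠ t in atTop, V (xh t) ≤ ε := fun ε hε =>
    eventually_le_of_hasDerivAt_le_neg_add (eventually_atTop.2 ⟨0, hVder⟩) hμd hε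
  have hxh : Tendsto xh atTop (𝓝 0) :=
    tendsto_of_forall_eventually_le_of_isCompact_sublevel hproper hVpos
      (eventually_atTop.2 ⟨0, hxhD⟩) hVxh
  exact ⟨hxh, hdcompat x 0 <| tendsto_dist_zero_of_tendsto_of_tendsto_dist_zero hdcont hdnn hdtri
    ((hd0 0 0).2 rfl) hxh hdto0⟩

/-- Steps 2–3 assembled: for a proper positive-definite Lyapunov function `V`
on the basin `D` with `∇V·f ≤ -V`, and a solution pair `(x, xh)` such that
`V(xh)` stays bounded, the auxiliary distance `d(x, xh)` is non-increasing and
tends to `0`, and `d/dt V(xh) ≤ -V(xh) + μ(d(x, xh))`, both `xh` and `x`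
converge to the origin. -/
theorem stmt17 (n : ℕ) (D : Set (Fin n → ℝ)) (hD : IsOpen D) (h0D : (0 : Fin n → ℝ) ∈ D)
    (V : (Fin n → ℝ) → ℝ) (hV : ContDiffOn ℝ 1 V D)
    (hVnn : ∀ y ∈ D, 0 ≤ V y) (hV0 : V 0 = 0)
    (hVpos : ∀ y ∈ D, y ≠ 0 → 0 < V y)
    (hproper : ∀ r : ℝ, IsCompact {y | y ∈ D ∧ V y ≤ r})
    (f : (Fin n → ℝ) → Fin n → ℝ)
    (hdecr : ∀ y ∈ D, fderiv ℝ V y (f y) ≤ -V y)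
    (d : (Fin n → ℝ) → (Fin n → ℝ) → ℝ)
    (hd0 : ∀ a b : Fin n → ℝ, d a b = 0 ↔ a = b)
    (hdsymm : ∀ a b : Fin n → ℝ, d a b = d b a)
    (hdtri : ∀ a b c : Fin n → ℝ, d a c ≤ d a b + d b c)
    (hdnn : ∀ a b : Fin n → ℝ, 0 ≤ d a b)
    (hdcont : Continuous (Function.uncurry d))
    (hdcompat : ∀ (u : ℝ → Fin n → ℝ) (y : Fin n → ℝ),
      Tendsto (fun t => d (u t) y) atTop (nhds 0) → Tendsto u atTop (nhds y))
    (μ : ℝ → ℝ) (hμc : ContinuousOn μ (Ici 0)) (hμmono : MonotoneOn μ (Ici 0))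
    (hμ0 : μ 0 = 0) (hμnn : ∀ s ≥ (0:ℝ), 0 ≤ μ s)
    (x xh : ℝ → Fin n → ℝ) (hxc : Continuous x) (hxhc : Continuous xh)
    (hxhD : ∀ t ≥ (0:ℝ), xh t ∈ D)
    (hbound : ∀ t ≥ (0:ℝ), V (xh t) ≤ max (V (xh 0)) 1)
    (hanti : AntitoneOn (fun t => d (x t) (xh t)) (Ici 0))
    (hdto0 : Tendsto (fun t => d (x t) (xh t)) atTop (nhds 0))
    (hVder : ∀ t ≥ (0:ℝ), ∃ dv : ℝ, HasDerivAt (fun τ => V (xh τ)) dv t ∧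
      dv ≤ -V (xh t) + μ (d (x t) (xh t))) :
    Tendsto xh atTop (nhds 0) ∧ Tendsto x atTop (nhds 0) :=
  stmt17_general n D V hVpos hproper d hd0 hdtri hdnn hdcont hdcompat μ hμc hμ0 x xh hxhD hdto0
    hVder
end

section
/- Let g be a Riemannian metric on ℝⁿ, complete, such that V(x) = d_g(x,0)² is C¹. Let f(x,u) = a(x) + B(x,u)u be a control system weakly contractive with respect to g, with a(0) = 0. Then L_a V(x) ≤ 0 for all x, i.e., the drift vector field a is weakly dissipative for the squared distance to the origin. -/
/-!
The flow of `a` is replaced by its Euler step `Φₜ p = p + t • a p`, which agrees with it to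
first order. Weak contractivity for `u = 0` says that the Lie derivative of `g` along `a` is
`≤ 0`, so for every `ε > 0` and every compact `K` we get `Φₜ^* g ≤ (1 + ε t) g` on `K` for all
small `t > 0`. Near-minimizing paths from `x` to `0` stay in a compact sublevel set of
`d(x, ·)` (completeness), and `Φₜ` maps them to paths from `x + t a(x)` to `Φₜ 0 = 0`; hence
`d(x + t a(x), 0) ≤ √(1 + ε t) d(x, 0)`, i.e. `V(x + t a(x)) ≤ (1 + ε t) V(x)`. Differentiating at
`t = 0` gives `L_a V(x) ≤ ε V(x)` for every `ε > 0`.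
-/

open Matrix Set

/-- Riemannian length of the restriction to `[0,1]` of a path `γ`, for the
metric given by the field of bilinear forms `G`. -/
noncomputable def pathLengthG (n : ℕ)
    (G : (Fin n → ℝ) → (Fin n → ℝ) → (Fin n → ℝ) → ℝ)
    (γ : ℝ → Fin n → ℝ) : ℝ :=
  ∫ s in (0:ℝ)..1, Real.sqrt (G (γ s) (deriv γ s) (deriv γ s))

/-- Riemannian distance associated with the metric `G`. -/
noncomputable def riemDistG (n : ℕ)
    (G : (Fin n → ℝ) → (Fin n → ℝ) → (Fin n → ℝ) → ℝ)
    (x y : Fin n → ℝ) : ℝ :=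
  sInf {l : ℝ | ∃ γ : ℝ → Fin n → ℝ,
    ContDiff ℝ 1 γ ∧ γ 0 = x ∧ γ 1 = y ∧ l = pathLengthG n G γ}

open Filter Topology

section BilinearLift

variable {E : Type*} [NormedAddCommGroup E] [NormedSpace ℝ E] [FiniteDimensional ℝ E]

theorem exists_contDiff_clm_eq {G : E → E → E → ℝ}
    (hGsymm : ∀ x φ ψ, G x φ ψ = G x ψ φ)
    (hGlin : ∀ x ψ, IsLinearMap ℝ (fun φ => G x φ ψ))
    (hGsmooth : ∀ φ ψ, ContDiff ℝ 1 (fun x => G x φ ψ)) :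
    ∃ g : E → E →L[ℝ] E →L[ℝ] ℝ, ContDiff ℝ 1 g ∧ G = fun x φ ψ => g x φ ψ := by
  have hlin_right : ∀ x φ, IsLinearMap ℝ (G x φ) := fun x φ => by
    simpa only [hGsymm x _ φ] using hGlin x φ
  let g : E → E →L[ℝ] E →L[ℝ] ℝ := fun x => LinearMap.toContinuousLinearMap
    { toFun := fun φ => LinearMap.toContinuousLinearMap (hlin_right x φ).mk'
      map_add' := fun φ φ' => by ext ψ; exact (hGlin x ψ).map_add φ φ'
      map_smul' := fun c φ => by ext ψ; exact (hGlin x ψ).map_smul c φ }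
  refine ⟨g, ?_, rfl⟩
  exact contDiff_clm_apply_iff.2 fun φ => contDiff_clm_apply_iff.2 fun ψ => hGsmooth φ ψ

end BilinearLift

section EulerStep

variable {E : Type*} [NormedAddCommGroup E] [NormedSpace ℝ E]
  (g : E → E →L[ℝ] E →L[ℝ] ℝ) (a : E → E)

/-- The quadratic form `(Φₜ^* g)_p (v, v)` of the pullback of `g` by the Euler step
`Φₜ p = p + t • a p`. -/
noncomputable def eulerPullback (t : ℝ) (p v : E) : ℝ :=
  g (p + t • a p) (v + t • fderiv ℝ a p v) (v + t • fderiv ℝ a p v)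

noncomputable def eulerPullbackDeriv (t : ℝ) (p v : E) : ℝ :=
  fderiv ℝ g (p + t • a p) (a p) (v + t • fderiv ℝ a p v) (v + t • fderiv ℝ a p v)
    + g (p + t • a p) (fderiv ℝ a p v) (v + t • fderiv ℝ a p v)
    + g (p + t • a p) (v + t • fderiv ℝ a p v) (fderiv ℝ a p v)

variable {g a}

@[simp]
theorem eulerPullback_zero (p v : E) : eulerPullback g a 0 p v = g p v v := by
  simp [eulerPullback]

theorem eulerPullback_smul (t c : ℝ) (p v : E) :
    eulerPullback g a t p (c • v) = c ^ 2 * eulerPullback g a t p v := by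
  simp only [eulerPullback, map_smul, smul_comm t c, ← smul_add, FunLike.coe_smul, Pi.smul_apply,
    smul_eq_mul]
  ring

theorem hasDerivAt_eulerPullback (hg : Differentiable ℝ g) (t : ℝ) (p v : E) :
    HasDerivAt (fun τ => eulerPullback g a τ p v) (eulerPullbackDeriv g a t p v) t := by
  have hy : HasDerivAt (fun τ : ℝ => p + τ • a p) (a p) t := by
    simpa using ((hasDerivAt_id t).smul_const (a p)).const_add p
  have hw : HasDerivAt (fun τ : ℝ => v + τ • fderiv ℝ a p v) (fderiv ℝ a p v) t := by
    simpa using ((hasDerivAt_id t).smul_const (fderiv ℝ a p v)).const_add v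
  have hgy := HasFDerivAt.comp_hasDerivAt (l := g) t (hg (p + t • a p)).hasFDerivAt hy
  exact ((hgy.clm_apply hw).clm_apply hw)

theorem continuous_eulerPullbackDeriv (hg : ContDiff ℝ 1 g) (ha : ContDiff ℝ 1 a) :
    Continuous fun z : ℝ × E × E => eulerPullbackDeriv g a z.1 z.2.1 z.2.2 := by
  have := hg.continuous_fderiv one_ne_zero
  have := ha.continuous_fderiv one_ne_zero
  have := hg.continuous
  have := ha.continuous
  unfold eulerPullbackDeriv
  fun_prop

theorem eulerPullbackDeriv_zero (hg : Differentiable ℝ g) (p v : E) :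
    eulerPullbackDeriv g a 0 p v =
      fderiv ℝ (fun y => g y v v) p (a p) + g p (fderiv ℝ a p v) v + g p v (fderiv ℝ a p v) := by
  have : HasFDerivAt (fun y => g y v v) _ p :=
    ((hg p).hasFDerivAt.clm_apply (hasFDerivAt_const v p)).clm_apply (hasFDerivAt_const v p)
  simp [eulerPullbackDeriv, this.fderiv]

theorem eulerPullback_le_of_deriv_lt (hg : Differentiable ℝ g) {t M : ℝ} (ht : 0 < t) {p v : E}
    (hD : ∀ τ ∈ Ioo 0 t, eulerPullbackDeriv g a τ p v < M) :
    eulerPullback g a t p v ≤ g p v v + M * t := by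
  obtain ⟨c, hc, hslope⟩ := exists_hasDerivAt_eq_slope (fun τ => eulerPullback g a τ p v)
    (fun τ => eulerPullbackDeriv g a τ p v) ht
    (fun τ _ => (hasDerivAt_eulerPullback hg τ p v).continuousAt.continuousWithinAt)
    (fun τ _ => hasDerivAt_eulerPullback hg τ p v)
  have := hD c hc
  rw [hslope, sub_zero, div_lt_iff₀ ht, eulerPullback_zero] at this
  linarith

theorem eventually_eulerPullback_le [FiniteDimensional ℝ E] (hg : ContDiff ℝ 1 g)
    (ha : ContDiff ℝ 1 a) (hpos : ∀ p v, v ≠ 0 → 0 < g p v v)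
    (hLie : ∀ p v, fderiv ℝ (fun y => g y v v) p (a p)
      + g p (fderiv ℝ a p v) v + g p v (fderiv ℝ a p v) ≤ 0)
    {K : Set E} (hK : IsCompact K) {ε : ℝ} (hε : 0 < ε) :
    ∀ᶠ t in 𝓝[>] 0, ∀ p ∈ K, ∀ v, eulerPullback g a t p v ≤ (1 + ε * t) * g p v v := by
  have hg1 : Differentiable ℝ g := hg.differentiable one_ne_zero
  -- The strict inequality at `τ = 0` persists for small `τ`, uniformly on the compact
  -- `K × sphere` (tube lemma); homogeneity in `v` then removes the restriction to the sphere.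
  have hD : ∀ᶠ τ in 𝓝 (0 : ℝ), ∀ pu ∈ K ×ˢ Metric.sphere (0 : E) 1,
      eulerPullbackDeriv g a τ pu.1 pu.2 < ε * g pu.1 pu.2 pu.2 := by
    refine (hK.prod (isCompact_sphere 0 1)).eventually_forall_of_forall_eventually ?_
    rintro ⟨p, u⟩ ⟨-, hu⟩
    refine (isOpen_lt (continuous_eulerPullbackDeriv hg ha) ?_).mem_nhds ?_
    · have := hg.continuous; fun_prop
    · have hu0 : u ≠ 0 := ne_zero_of_mem_unit_sphere ⟨u, hu⟩
      show eulerPullbackDeriv g a 0 p u < ε * g p u u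
      rw [eulerPullbackDeriv_zero hg1]
      linarith [hLie p u, mul_pos hε (hpos p u hu0)]
  obtain ⟨δ, hδ, hδD⟩ := Metric.eventually_nhds_iff_ball.1 hD
  filter_upwards [Ioo_mem_nhdsGT hδ] with t ht p hp v
  rcases eq_or_ne v 0 with rfl | hv
  · simp [eulerPullback]
  set u := ‖v‖⁻¹ • v
  have hu : u ∈ Metric.sphere (0 : E) 1 := by simp [u, norm_smul, hv]
  have hscale : ∀ τ, eulerPullback g a τ p v = ‖v‖ ^ 2 * eulerPullback g a τ p u := fun τ => by
    rw [← eulerPullback_smul, smul_inv_smul₀ (norm_ne_zero_iff.2 hv)]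
  have hscale0 := hscale 0
  rw [eulerPullback_zero, eulerPullback_zero] at hscale0
  have hu_le := eulerPullback_le_of_deriv_lt hg1 ht.1 fun τ hτ =>
    hδD τ (by simp [abs_of_pos hτ.1]; linarith [hτ.2, ht.2]) (p, u) ⟨hp, hu⟩
  calc eulerPullback g a t p v
      ≤ ‖v‖ ^ 2 * (g p u u + ε * g p u u * t) := by
        rw [hscale]; exact mul_le_mul_of_nonneg_left hu_le (sq_nonneg _)
    _ = (1 + ε * t) * g p v v := by rw [hscale0]; ring

end EulerStep

section PathLength

variable {n : ℕ}

theorem pathLengthG_nonneg (G : (Fin n → ℝ) → (Fin n → ℝ) → (Fin n → ℝ) → ℝ)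
    (γ : ℝ → Fin n → ℝ) : 0 ≤ pathLengthG n G γ :=
  intervalIntegral.integral_nonneg zero_le_one fun _ _ => Real.sqrt_nonneg _

theorem riemDistG_le_pathLengthG {G : (Fin n → ℝ) → (Fin n → ℝ) → (Fin n → ℝ) → ℝ}
    {γ : ℝ → Fin n → ℝ} (hγ : ContDiff ℝ 1 γ) :
    riemDistG n G (γ 0) (γ 1) ≤ pathLengthG n G γ :=
  csInf_le ⟨0, by rintro l ⟨γ', -, -, -, rfl⟩; exact pathLengthG_nonneg G γ'⟩ ⟨γ, hγ, rfl, rfl, rfl⟩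

theorem riemDistG_nonneg (G : (Fin n → ℝ) → (Fin n → ℝ) → (Fin n → ℝ) → ℝ)
    (x y : Fin n → ℝ) : 0 ≤ riemDistG n G x y :=
  Real.sInf_nonneg <| by rintro l ⟨γ, -, -, -, rfl⟩; exact pathLengthG_nonneg G γ

theorem exists_pathLengthG_lt (G : (Fin n → ℝ) → (Fin n → ℝ) → (Fin n → ℝ) → ℝ)
    (x y : Fin n → ℝ) {η : ℝ} (hη : 0 < η) :
    ∃ γ : ℝ → Fin n → ℝ, ContDiff ℝ 1 γ ∧ γ 0 = x ∧ γ 1 = y ∧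
      pathLengthG n G γ < riemDistG n G x y + η := by
  have hne : {l : ℝ | ∃ γ : ℝ → Fin n → ℝ,
      ContDiff ℝ 1 γ ∧ γ 0 = x ∧ γ 1 = y ∧ l = pathLengthG n G γ}.Nonempty :=
    ⟨_, fun s => x + s • (y - x), by fun_prop, by simp, by simp, rfl⟩
  obtain ⟨l, ⟨γ, hγ, h0, h1, rfl⟩, hl⟩ := Real.lt_sInf_add_pos hne hη
  exact ⟨γ, hγ, h0, h1, hl⟩

variable {g : (Fin n → ℝ) → (Fin n → ℝ) →L[ℝ] (Fin n → ℝ) →L[ℝ] ℝ}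

theorem continuous_speed (hg : Continuous g) {γ : ℝ → Fin n → ℝ} (hγ : ContDiff ℝ 1 γ) :
    Continuous fun s => √(g (γ s) (deriv γ s) (deriv γ s)) := by
  have := hγ.continuous_deriv le_rfl
  have := hγ.continuous
  fun_prop

theorem riemDistG_le_pathLengthG_of_mem_Icc (hg : Continuous g) {γ : ℝ → Fin n → ℝ}
    (hγ : ContDiff ℝ 1 γ) {τ : ℝ} (hτ : τ ∈ Icc (0 : ℝ) 1) :
    riemDistG n (fun x φ ψ => g x φ ψ) (γ 0) (γ τ) ≤ pathLengthG n (fun x φ ψ => g x φ ψ) γ := by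
  set speed := fun s => √(g (γ s) (deriv γ s) (deriv γ s))
  have hderiv : ∀ σ, deriv (fun σ => γ (τ * σ)) σ = τ • deriv γ (τ * σ) := fun σ => by
    have hγ' := ((hγ.differentiable one_ne_zero) (τ * σ)).hasDerivAt
    simpa [Function.comp_def] using (hγ'.scomp σ ((hasDerivAt_id σ).const_mul τ)).deriv
  have hrestrict : pathLengthG n (fun x φ ψ => g x φ ψ) (fun σ => γ (τ * σ))
      = ∫ σ in (0 : ℝ)..τ, speed σ := by
    simp only [pathLengthG, hderiv, map_smul, FunLike.coe_smul, Pi.smul_apply, smul_eq_mul,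
      ← mul_assoc, ← sq, Real.sqrt_mul (sq_nonneg τ), Real.sqrt_sq hτ.1]
    rw [intervalIntegral.integral_const_mul, ← smul_eq_mul,
      intervalIntegral.smul_integral_comp_mul_left (fun s => speed s), mul_zero, mul_one]
  calc riemDistG n (fun x φ ψ => g x φ ψ) (γ 0) (γ τ)
      ≤ pathLengthG n (fun x φ ψ => g x φ ψ) (fun σ => γ (τ * σ)) := by
        simpa only [mul_zero, mul_one] using
          riemDistG_le_pathLengthG (γ := fun σ => γ (τ * σ)) (by fun_prop)
    _ = ∫ σ in (0 : ℝ)..τ, speed σ := hrestrict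
    _ ≤ ∫ σ in (0 : ℝ)..1, speed σ :=
        intervalIntegral.integral_mono_interval le_rfl hτ.1 hτ.2
          (Eventually.of_forall fun _ => Real.sqrt_nonneg _)
          ((continuous_speed hg hγ).intervalIntegrable _ _)

theorem pathLengthG_eulerStep_le (hg : Continuous g) {a : (Fin n → ℝ) → Fin n → ℝ}
    (ha : ContDiff ℝ 1 a) {K : Set (Fin n → ℝ)} {t c : ℝ} (hc : 0 ≤ c)
    (hQ : ∀ p ∈ K, ∀ v, eulerPullback g a t p v ≤ c * g p v v)
    {γ : ℝ → Fin n → ℝ} (hγ : ContDiff ℝ 1 γ) (hγK : ∀ s ∈ Icc (0 : ℝ) 1, γ s ∈ K) :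
    pathLengthG n (fun x φ ψ => g x φ ψ) (fun s => γ s + t • a (γ s))
      ≤ √c * pathLengthG n (fun x φ ψ => g x φ ψ) γ := by
  have hderiv : ∀ s, deriv (fun s => γ s + t • a (γ s)) s
      = deriv γ s + t • fderiv ℝ a (γ s) (deriv γ s) := fun s => by
    have hγ' := ((hγ.differentiable one_ne_zero) s).hasDerivAt
    have haγ := ((ha.differentiable one_ne_zero) (γ s)).hasFDerivAt.comp_hasDerivAt s hγ'
    exact (hγ'.add (haγ.const_smul t)).deriv
  have hspeed : ∀ s ∈ Icc (0 : ℝ) 1,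
      √(g (γ s + t • a (γ s)) (deriv (fun s => γ s + t • a (γ s)) s)
        (deriv (fun s => γ s + t • a (γ s)) s)) ≤ √c * √(g (γ s) (deriv γ s) (deriv γ s)) :=
    fun s hs => by
      rw [← Real.sqrt_mul hc, hderiv]
      exact Real.sqrt_le_sqrt (hQ _ (hγK s hs) _)
  have hγt : ContDiff ℝ 1 fun s => γ s + t • a (γ s) := by fun_prop
  rw [pathLengthG, pathLengthG, ← intervalIntegral.integral_const_mul]
  exact intervalIntegral.integral_mono_on zero_le_one
    ((continuous_speed hg hγt).intervalIntegrable _ _)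
    ((continuous_speed hg hγ).const_mul _ |>.intervalIntegrable _ _) hspeed

theorem riemDistG_eulerStep_le (hg : Continuous g) {a : (Fin n → ℝ) → Fin n → ℝ}
    (ha : ContDiff ℝ 1 a) {x y : Fin n → ℝ} (hay : a y = 0) {t c : ℝ} (hc : 0 ≤ c)
    (hQ : ∀ p ∈ {p | riemDistG n (fun x φ ψ => g x φ ψ) x p
        ≤ riemDistG n (fun x φ ψ => g x φ ψ) x y + 1},
      ∀ v, eulerPullback g a t p v ≤ c * g p v v) :
    riemDistG n (fun x φ ψ => g x φ ψ) (x + t • a x) y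
      ≤ √c * riemDistG n (fun x φ ψ => g x φ ψ) x y := by
  set d := riemDistG n (fun x φ ψ => g x φ ψ) x y
  -- paths from `x` to `y` that are shorter than `d + 1` stay in the domain of `hQ`
  have hnear : ∀ η ∈ Ioo (0 : ℝ) 1,
      riemDistG n (fun x φ ψ => g x φ ψ) (x + t • a x) y ≤ √c * (d + η) := by
    rintro η ⟨hη, hη1⟩
    obtain ⟨γ, hγ, rfl, rfl, hlen⟩ := exists_pathLengthG_lt (fun x φ ψ => g x φ ψ) x y hη
    have hγK : ∀ s ∈ Icc (0 : ℝ) 1,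
        riemDistG n (fun x φ ψ => g x φ ψ) (γ 0) (γ s) ≤ d + 1 := fun s hs =>
      (riemDistG_le_pathLengthG_of_mem_Icc hg hγ hs).trans (by linarith)
    calc riemDistG n (fun x φ ψ => g x φ ψ) (γ 0 + t • a (γ 0)) (γ 1)
        ≤ pathLengthG n (fun x φ ψ => g x φ ψ) (fun s => γ s + t • a (γ s)) := by
          simpa [hay] using riemDistG_le_pathLengthG (γ := fun s => γ s + t • a (γ s)) (by fun_prop)
      _ ≤ √c * pathLengthG n (fun x φ ψ => g x φ ψ) γ :=
          pathLengthG_eulerStep_le hg ha hc hQ hγ hγK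
      _ ≤ √c * (d + η) := mul_le_mul_of_nonneg_left hlen.le (Real.sqrt_nonneg c)
  refine ge_of_tendsto (f := fun η => √c * (d + η)) (x := 𝓝[>] 0) ?_ ?_
  · have hcont : Continuous fun η : ℝ => √c * (d + η) := by fun_prop
    simpa using (hcont.tendsto 0).mono_left nhdsWithin_le_nhds
  · filter_upwards [Ioo_mem_nhdsGT one_pos] using hnear

end PathLength

theorem nonpos_of_hasDerivAt_of_le_one_add_mul {f : ℝ → ℝ} {f' : ℝ} (hf : HasDerivAt f f' 0)
    (h : ∀ ε > 0, ∀ᶠ t in 𝓝[>] 0, f t ≤ (1 + ε * t) * f 0) : f' ≤ 0 := by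
  have hslope : Tendsto (slope f 0) (𝓝[>] 0) (𝓝 f') :=
    (hasDerivAt_iff_tendsto_slope.1 hf).mono_left (nhdsWithin_mono _ fun _ ht => ne_of_gt ht)
  have hle : ∀ ε > 0, f' ≤ ε * f 0 := fun ε hε => by
    refine le_of_tendsto hslope ?_
    filter_upwards [h ε hε, self_mem_nhdsWithin] with t ht (ht0 : 0 < t)
    rw [slope_def_field, sub_zero, div_le_iff₀ ht0]
    linarith
  have hlim : Tendsto (fun ε => ε * f 0) (𝓝[>] 0) (𝓝 0) := by
    simpa using ((continuous_mul_const (f 0)).tendsto 0).mono_left nhdsWithin_le_nhds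
  exact ge_of_tendsto hlim (eventually_nhdsWithin_of_forall hle)

theorem stmt18_general (n m : ℕ)
    (G : (Fin n → ℝ) → (Fin n → ℝ) → (Fin n → ℝ) → ℝ)
    (hGsymm : ∀ x φ ψ, G x φ ψ = G x ψ φ)
    (hGlin : ∀ x ψ, IsLinearMap ℝ (fun φ => G x φ ψ))
    (hGpos : ∀ x φ, φ ≠ 0 → 0 < G x φ φ)
    (hGsmooth : ∀ φ ψ, ContDiff ℝ 1 (fun x => G x φ ψ))
    (hcomplete : ∀ (x : Fin n → ℝ) (r : ℝ), IsCompact {y | riemDistG n G x y ≤ r})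
    (a : (Fin n → ℝ) → Fin n → ℝ) (ha : ContDiff ℝ 1 a) (ha0 : a 0 = 0)
    (B : (Fin n → ℝ) → (Fin m → ℝ) → Matrix (Fin n) (Fin m) ℝ)
    (hcontr : ∀ (u : Fin m → ℝ) (x φ : Fin n → ℝ),
      lieDerivG n G (fun y => a y + (B y u) *ᵥ u) x φ φ ≤ 0)
    (hVC1 : ContDiff ℝ 1 (fun y => (riemDistG n G y 0) ^ 2)) :
    ∀ x : Fin n → ℝ, fderiv ℝ (fun y => (riemDistG n G y 0) ^ 2) x (a x) ≤ 0 := by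
  obtain ⟨g, hg, rfl⟩ := exists_contDiff_clm_eq hGsymm hGlin hGsmooth
  have hLie : ∀ p v, fderiv ℝ (fun y => g y v v) p (a p)
      + g p (fderiv ℝ a p v) v + g p v (fderiv ℝ a p v) ≤ 0 := fun p v => by
    simpa [lieDerivG] using hcontr 0 p v
  intro x
  set V := fun y => riemDistG n (fun x φ ψ => g x φ ψ) y 0 ^ 2
  have hline : HasDerivAt (fun t : ℝ => V (x + t • a x)) (fderiv ℝ V x (a x)) 0 := by
    have hV := ((hVC1.differentiable one_ne_zero) x).hasFDerivAt
    have hx : HasDerivAt (fun t : ℝ => x + t • a x) (a x) 0 := by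
      simpa using ((hasDerivAt_id (0 : ℝ)).smul_const (a x)).const_add x
    exact hV.comp_hasDerivAt_of_eq 0 hx (by simp)
  refine nonpos_of_hasDerivAt_of_le_one_add_mul hline fun ε hε => ?_
  filter_upwards [eventually_eulerPullback_le hg ha hGpos hLie (hcomplete x _) hε,
    self_mem_nhdsWithin] with t hQ (ht : 0 < t)
  rw [zero_smul, add_zero]
  have hc : 0 ≤ 1 + ε * t := by positivity
  have hdist := riemDistG_eulerStep_le hg.continuous ha ha0 hc hQ
  calc V (x + t • a x) ≤ (√(1 + ε * t) * riemDistG n (fun x φ ψ => g x φ ψ) x 0) ^ 2 :=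
        pow_le_pow_left₀ (riemDistG_nonneg _ _ _) hdist 2
    _ = (1 + ε * t) * V x := by rw [mul_pow, Real.sq_sqrt hc]

/-- If `f(x,u) = a(x) + B(x,u)u` is weakly contractive with respect to the
complete metric `G`, `a(0) = 0`, and `V(x) = d_G(x,0)²` is C¹, then
`L_a V ≤ 0`: the drift is weakly dissipative for the squared distance to the
origin. -/
theorem stmt18 (n m : ℕ)
    (G : (Fin n → ℝ) → (Fin n → ℝ) → (Fin n → ℝ) → ℝ)
    (hGsymm : ∀ x φ ψ, G x φ ψ = G x ψ φ)
    (hGlin : ∀ x ψ, IsLinearMap ℝ (fun φ => G x φ ψ))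
    (hGpos : ∀ x φ, φ ≠ 0 → 0 < G x φ φ)
    (hGsmooth : ∀ φ ψ, ContDiff ℝ 1 (fun x => G x φ ψ))
    (hcomplete : ∀ (x : Fin n → ℝ) (r : ℝ), IsCompact {y | riemDistG n G x y ≤ r})
    (a : (Fin n → ℝ) → Fin n → ℝ) (ha : ContDiff ℝ 1 a) (ha0 : a 0 = 0)
    (B : (Fin n → ℝ) → (Fin m → ℝ) → Matrix (Fin n) (Fin m) ℝ)
    (hfC1 : ∀ u : Fin m → ℝ, ContDiff ℝ 1 (fun y => a y + (B y u) *ᵥ u))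
    (hcontr : ∀ (u : Fin m → ℝ) (x φ : Fin n → ℝ),
      lieDerivG n G (fun y => a y + (B y u) *ᵥ u) x φ φ ≤ 0)
    (hVC1 : ContDiff ℝ 1 (fun y => (riemDistG n G y 0) ^ 2)) :
    ∀ x : Fin n → ℝ, fderiv ℝ (fun y => (riemDistG n G y 0) ^ 2) x (a x) ≤ 0 :=
  stmt18_general n m G hGsymm hGlin hGpos hGsmooth hcomplete a ha ha0 B hcontr hVC1
end
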